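/- Assume −2K cos α₄ − 2cos α₂ + 4r cos 2α₂ > 0 and 2K cos α₄ + 2cos α₂ + 4r cos 2α₂ < 0. Let ψ : ℝ → ℝ³ be a differentiable solution of ψ′(t) = F(ψ(t)) with ψ(0) = (π, s, 0) for some s ∈ (0, π). Then for all t ∈ ℝ, ψ(t) = (π, χ(t), 0) with χ(t) ∈ (0, π), and ψ(t) → (π, π, 0) as t → +∞ while ψ(t) → (π, 0, 0) as t → −∞; that is, ψ is a heteroclinic trajectory from the equilibrium D S S = (π,0,0) to the equilibrium D D S = (π,π,0). -/

import Mathlib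

open Real Filter

/-- Odd part of the pairwise coupling function: `ḡ₂(ϑ) = −cos α₂ sin ϑ + r cos 2α₂ sin 2ϑ`. -/
noncomputable def gbar2 (α₂ r : ℝ) (ϑ : ℝ) : ℝ :=
  -cos α₂ * sin ϑ + r * cos (2 * α₂) * sin (2 * ϑ)

/-- Odd part of the interpopulation coupling function: `ḡ₄(ϑ) = −cos α₄ sin ϑ`. -/
noncomputable def gbar4 (α₄ : ℝ) (ϑ : ℝ) : ℝ := -cos α₄ * sin ϑ

/-- The reduced phase-difference vector field for M = 3 populations of N = 2 oscillators
(indices taken cyclically in `Fin 3`). -/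
noncomputable def F (α₂ α₄ r K : ℝ) (ψ : Fin 3 → ℝ) : Fin 3 → ℝ := fun σ =>
  2 * gbar2 α₂ r (ψ σ)
    - K / 2 * (gbar4 α₄ (ψ (σ - 1) + ψ σ) + gbar4 α₄ (ψ σ - ψ (σ - 1)))
    + K / 2 * (gbar4 α₄ (ψ (σ + 1) + ψ σ) + gbar4 α₄ (ψ σ - ψ (σ + 1)))

section Helpers

open Set Topology

/-- If `|y'| ≤ C|y|` everywhere and `y` vanishes somewhere, it vanishes everywhere. -/
lemma gronwall_zero' {y d : ℝ → ℝ} {C : ℝ}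
    (hy : ∀ t, HasDerivAt y (d t) t) (hb : ∀ t, |d t| ≤ C * |y t|)
    {t₀ : ℝ} (h0 : y t₀ = 0) : ∀ t, y t = 0 := by
  have fwd : ∀ (z e : ℝ → ℝ), (∀ t, HasDerivAt z (e t) t) → (∀ t, |e t| ≤ C * |z t|) →
      ∀ t₁, z t₁ = 0 → ∀ t, t₁ ≤ t → z t = 0 := by
    intro z e hz hbz t₁ hz0 t ht
    have key := norm_le_gronwallBound_of_norm_deriv_right_le (f := z) (f' := e)
      (δ := 0) (K := C) (ε := 0) (a := t₁) (b := t)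
      (fun x _ => ((hz x).continuousAt).continuousWithinAt)
      (fun x _ => (hz x).hasDerivWithinAt)
      (by simp [hz0]) (fun x _ => by simpa using hbz x) t ⟨ht, le_refl t⟩
    rw [gronwallBound_ε0_δ0] at key
    rw [Real.norm_eq_abs] at key
    exact abs_eq_zero.mp (le_antisymm key (abs_nonneg _))
  intro t
  rcases le_total t₀ t with h | h
  · exact fwd y d hy hb t₀ h0 t h
  · set z : ℝ → ℝ := fun t => y (2 * t₀ - t) with hzdef
    have hz : ∀ t, HasDerivAt z (-d (2 * t₀ - t)) t := by
      intro t
      have h1 : HasDerivAt (fun t : ℝ => 2 * t₀ - t) (-1) t := by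
        simpa using (hasDerivAt_id t).const_sub (2 * t₀)
      have h2 := (hy (2 * t₀ - t)).comp t h1; rw [mul_neg_one] at h2; exact h2
    have hbz : ∀ t, |(-d (2 * t₀ - t))| ≤ C * |z t| := by
      intro t; simpa using hb (2 * t₀ - t)
    have := fwd z _ hz hbz t₀
      (by show y (2*t₀ - t₀) = 0; rw [show 2*t₀ - t₀ = t₀ by ring]; exact h0)
      (2 * t₀ - t) (by linarith)
    simpa [hzdef] using this

/-- The limit at `+∞` of a solution of a 1-D autonomous ODE is an equilibrium. -/
lemma limit_equilibrium {g : ℝ → ℝ} (hg : Continuous g) {χ : ℝ → ℝ}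
    (hχ : ∀ t, HasDerivAt χ (g (χ t)) t) {L : ℝ}
    (hL : Tendsto χ atTop (𝓝 L)) : g L = 0 := by
  have hcont : Continuous χ := continuous_iff_continuousAt.2 fun t => (hχ t).continuousAt
  have mvt : ∀ n : ℕ, ∃ c ∈ Ioo (n : ℝ) (n + 1), g (χ c) = χ (n + 1) - χ n := by
    intro n
    have h01 : (n : ℝ) < n + 1 := by linarith
    obtain ⟨c, hc, hceq⟩ := exists_hasDerivAt_eq_slope χ (fun t => g (χ t)) h01
      (hcont.continuousOn) (fun x _ => hχ x)
    exact ⟨c, hc, by rw [hceq]; field_simp; ring⟩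
  choose c hc hceq using mvt
  have hcTop : Tendsto c atTop atTop :=
    tendsto_atTop_mono (fun n => (hc n).1.le) tendsto_natCast_atTop_atTop
  have t1 : Tendsto (fun n => g (χ (c n))) atTop (𝓝 (g L)) :=
    (hg.continuousAt.tendsto).comp (hL.comp hcTop)
  have t2 : Tendsto (fun n : ℕ => χ ((n : ℝ) + 1) - χ n) atTop (𝓝 (L - L)) :=
    Tendsto.sub (hL.comp (tendsto_atTop_add_const_right _ 1 tendsto_natCast_atTop_atTop))
      (hL.comp tendsto_natCast_atTop_atTop)
  rw [sub_self] at t2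
  exact tendsto_nhds_unique t1 (t2.congr fun n => (hceq n).symm)

/-- One-dimensional dynamics `χ' = sin χ (A + B cos χ)` with `A ± B > 0`:
solutions starting in `(0, π)` stay there and connect `0` to `π`. -/
lemma onedim {A B : ℝ} (h1 : 0 < A + B) (h2 : B < A) {χ : ℝ → ℝ}
    (hχ : ∀ t, HasDerivAt χ (sin (χ t) * (A + B * cos (χ t))) t)
    {s : ℝ} (hs : s ∈ Ioo 0 π) (h0 : χ 0 = s) :
    (∀ t, χ t ∈ Ioo 0 π) ∧ Tendsto χ atTop (𝓝 π) ∧ Tendsto χ atBot (𝓝 0) := by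
  obtain ⟨hs0, hsπ⟩ := hs
  have hpos : ∀ x : ℝ, 0 < A + B * cos x := by
    intro x
    have hc1 : -1 ≤ cos x := neg_one_le_cos x
    have hc2 : cos x ≤ 1 := cos_le_one x
    rcases le_or_gt 0 B with hB | hB
    · nlinarith
    · nlinarith
  set g : ℝ → ℝ := fun x => sin x * (A + B * cos x) with hgdef
  have hgcont : Continuous g := by fun_prop
  set C : ℝ := |A| + |B| with hCdef
  have hfac : ∀ x : ℝ, |A + B * cos x| ≤ C := by
    intro x
    have : |B * cos x| ≤ |B| := by
      rw [abs_mul]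
      exact mul_le_of_le_one_right (abs_nonneg B) (abs_cos_le_one x)
    calc |A + B * cos x| ≤ |A| + |B * cos x| := abs_add_le _ _
      _ ≤ C := by rw [hCdef]; linarith
  have hb0 : ∀ t, |g (χ t)| ≤ C * |χ t| := by
    intro t
    rw [hgdef]
    calc |sin (χ t) * (A + B * cos (χ t))| = |sin (χ t)| * |A + B * cos (χ t)| := abs_mul _ _
      _ ≤ |χ t| * C := mul_le_mul abs_sin_le_abs (hfac _) (abs_nonneg _) (abs_nonneg _)
      _ = C * |χ t| := mul_comm _ _
  have ne0 : ∀ t, χ t ≠ 0 := by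
    intro t ht
    have := gronwall_zero' hχ hb0 ht 0
    rw [h0] at this; exact hs0.ne' this
  have neπ : ∀ t, χ t ≠ π := by
    intro t ht
    have hy : ∀ u, HasDerivAt (fun u => χ u - π) (g (χ u)) u := fun u => (hχ u).sub_const π
    have hb : ∀ u, |g (χ u)| ≤ C * |χ u - π| := by
      intro u
      have habs : |sin (χ u)| ≤ |χ u - π| := by
        have : sin (χ u) = -sin (χ u - π) := by
          rw [sin_sub]; simp
        rw [this, abs_neg]; exact abs_sin_le_abs
      rw [hgdef]
      calc |sin (χ u) * (A + B * cos (χ u))| = |sin (χ u)| * |A + B * cos (χ u)| := abs_mul _ _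
        _ ≤ |χ u - π| * C := mul_le_mul habs (hfac _) (abs_nonneg _) (abs_nonneg _)
        _ = C * |χ u - π| := mul_comm _ _
    have := gronwall_zero' hy hb (t₀ := t) (by simp [ht]) 0
    rw [h0] at this
    exact hsπ.ne (by linarith)
  have hcont : Continuous χ := continuous_iff_continuousAt.2 fun t => (hχ t).continuousAt
  have mem : ∀ t, χ t ∈ Ioo 0 π := by
    intro t
    by_contra hmem
    rw [Ioo, mem_setOf_eq, not_and_or, not_lt, not_lt] at hmem
    have : ∃ u, χ u = 0 ∨ χ u = π := by
      rcases hmem with h | h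
      · have h' : χ t < 0 := lt_of_le_of_ne h (ne0 t)
        have : (0 : ℝ) ∈ uIcc (χ t) (χ 0) := by
          rw [h0]; exact mem_uIcc.2 (Or.inl ⟨h'.le, hs0.le⟩)
        obtain ⟨u, _, hu⟩ := intermediate_value_uIcc (hcont.continuousOn) this
        exact ⟨u, Or.inl hu⟩
      · have h' : π < χ t := lt_of_le_of_ne h (Ne.symm (neπ t))
        have : π ∈ uIcc (χ 0) (χ t) := by
          rw [h0]; exact mem_uIcc.2 (Or.inl ⟨hsπ.le, h'.le⟩)
        obtain ⟨u, _, hu⟩ := intermediate_value_uIcc (hcont.continuousOn) this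
        exact ⟨u, Or.inr hu⟩
    obtain ⟨u, hu | hu⟩ := this
    · exact ne0 u hu
    · exact neπ u hu
  have hderivpos : ∀ t, 0 < deriv χ t := by
    intro t
    rw [(hχ t).deriv]
    exact mul_pos (sin_pos_of_pos_of_lt_pi (mem t).1 (mem t).2) (hpos _)
  have hmono : StrictMono χ := strictMono_of_deriv_pos hderivpos
  have hbddA : BddAbove (range χ) := ⟨π, by rintro _ ⟨t, rfl⟩; exact (mem t).2.le⟩
  have hbddB : BddBelow (range χ) := ⟨0, by rintro _ ⟨t, rfl⟩; exact (mem t).1.le⟩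
  refine ⟨mem, ?_, ?_⟩
  · set L : ℝ := ⨆ t, χ t with hLdef
    have hLtop : Tendsto χ atTop (𝓝 L) := tendsto_atTop_ciSup hmono.monotone hbddA
    have hgL : g L = 0 := limit_equilibrium hgcont hχ hLtop
    have hLge : s ≤ L := h0 ▸ le_ciSup hbddA 0
    have hLle : L ≤ π := ciSup_le fun t => (mem t).2.le
    have hsinL : sin L = 0 := by
      rcases mul_eq_zero.1 hgL with h | h
      · exact h
      · exact absurd h (hpos L).ne'
    have : L = π := by
      by_contra hne
      have hLlt : L < π := lt_of_le_of_ne hLle hne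
      exact (sin_pos_of_pos_of_lt_pi (lt_of_lt_of_le hs0 hLge) hLlt).ne' hsinL
    rwa [this] at hLtop
  · set L : ℝ := ⨅ t, χ t with hLdef
    have hLbot : Tendsto χ atBot (𝓝 L) := tendsto_atBot_ciInf hmono.monotone hbddB
    have hχ' : ∀ t, HasDerivAt (fun u => χ (-u)) (-(g (χ (-t)))) t := by
      intro t
      have h1 : HasDerivAt (fun u : ℝ => -u) (-1) t := (hasDerivAt_id t).neg
      have h2 := (hχ (-t)).comp t h1; rw [mul_neg_one] at h2; exact h2
    have hLtop' : Tendsto (fun u => χ (-u)) atTop (𝓝 L) :=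
      hLbot.comp tendsto_neg_atTop_atBot
    have hgL : -(g L) = 0 :=
      limit_equilibrium (g := fun x => -(g x)) (by fun_prop)
        (χ := fun u => χ (-u)) (fun t => hχ' t) hLtop'
    have hgL' : g L = 0 := by linarith [hgL]
    have hLle : L ≤ s := h0 ▸ ciInf_le hbddB 0
    have hLge : 0 ≤ L := le_ciInf fun t => (mem t).1.le
    have hsinL : sin L = 0 := by
      rcases mul_eq_zero.1 hgL' with h | h
      · exact h
      · exact absurd h (hpos L).ne'
    have : L = 0 := by
      by_contra hne
      have hLpos : 0 < L := lt_of_le_of_ne hLge (Ne.symm hne)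
      exact (sin_pos_of_pos_of_lt_pi hLpos (lt_of_le_of_lt hLle hsπ)).ne' hsinL
    rwa [this] at hLbot

lemma F0_eq (α₂ α₄ r K : ℝ) (ψ : Fin 3 → ℝ) :
    F α₂ α₄ r K ψ 0 = sin (ψ 0 - π) *
      (2 * cos α₂ + 4 * r * cos (2 * α₂) * cos (ψ 0 - π)
        - K * cos α₄ * cos (ψ 2) + K * cos α₄ * cos (ψ 1)) := by
  have e1 : (0 : Fin 3) - 1 = 2 := by decide
  have e2 : (0 : Fin 3) + 1 = 1 := by decide
  simp only [F, gbar2, gbar4, e1, e2]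
  simp only [sin_add, sin_sub, cos_add, cos_sub, sin_two_mul, cos_pi, sin_pi]
  ring

lemma F2_eq (α₂ α₄ r K : ℝ) (ψ : Fin 3 → ℝ) :
    F α₂ α₄ r K ψ 2 = sin (ψ 2) *
      (-2 * cos α₂ + 4 * r * cos (2 * α₂) * cos (ψ 2)
        + K * cos α₄ * cos (ψ 1) - K * cos α₄ * cos (ψ 0)) := by
  have e1 : (2 : Fin 3) - 1 = 1 := by decide
  have e2 : (2 : Fin 3) + 1 = 0 := by decide
  simp only [F, gbar2, gbar4, e1, e2]
  simp only [sin_add, sin_sub, cos_add, cos_sub, sin_two_mul]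
  ring

lemma F1_eq (α₂ α₄ r K : ℝ) (ψ : Fin 3 → ℝ) (hψ0 : ψ 0 = π) (hψ2 : ψ 2 = 0) :
    F α₂ α₄ r K ψ 1 = sin (ψ 1) *
      ((-2 * cos α₂ - 2 * K * cos α₄) + (4 * r * cos (2 * α₂)) * cos (ψ 1)) := by
  have e1 : (1 : Fin 3) - 1 = 0 := by decide
  have e2 : (1 : Fin 3) + 1 = 2 := by decide
  simp only [F, gbar2, gbar4, e1, e2, hψ0, hψ2]
  simp only [sin_add, sin_sub, cos_add, cos_sub, sin_two_mul, cos_pi, sin_pi, cos_zero, sin_zero]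
  ring

end Helpers

/-- Under the eigenvalue conditions `λ₂^{DSS} > 0` and `λ₂^{DDS} < 0`, every solution
starting at `(π, s, 0)` with `s ∈ (0, π)` stays on the invariant line segment
`{(π, χ, 0) : χ ∈ (0, π)}` and is a heteroclinic trajectory from `D S S = (π,0,0)`
to `D D S = (π,π,0)`. -/
theorem heteroclinic_DSS_to_DDS (α₂ α₄ r K : ℝ) (hK : 0 < K)
    (h₁ : -2 * K * cos α₄ - 2 * cos α₂ + 4 * r * cos (2 * α₂) > 0)
    (h₂ : 2 * K * cos α₄ + 2 * cos α₂ + 4 * r * cos (2 * α₂) < 0)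
    (ψ : ℝ → Fin 3 → ℝ)
    (hode : ∀ t : ℝ, HasDerivAt ψ (F α₂ α₄ r K (ψ t)) t)
    (s : ℝ) (hs : s ∈ Set.Ioo 0 π)
    (hinit : ψ 0 = ![π, s, 0]) :
    (∀ t : ℝ, ψ t 0 = π ∧ ψ t 2 = 0 ∧ ψ t 1 ∈ Set.Ioo 0 π) ∧
    Tendsto ψ atTop (nhds ![π, π, 0]) ∧
    Tendsto ψ atBot (nhds ![π, 0, 0]) := by
  -- coordinate derivatives
  have hcoord : ∀ (σ : Fin 3) (t : ℝ),
      HasDerivAt (fun t => ψ t σ) (F α₂ α₄ r K (ψ t) σ) t :=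
    fun σ t => hasDerivAt_pi.1 (hode t) σ
  have hψ00 : ψ 0 0 = π := by rw [hinit]; rfl
  have hψ01 : ψ 0 1 = s := by rw [hinit]; rfl
  have hψ02 : ψ 0 2 = 0 := by rw [hinit]; rfl
  -- invariance: ψ₀ ≡ π
  have habscos : ∀ a b : ℝ, |a * cos b| ≤ |a| := fun a b => by
    rw [abs_mul]; exact mul_le_of_le_one_right (abs_nonneg a) (abs_cos_le_one b)
  have hπ : ∀ t, ψ t 0 = π := by
    have hy : ∀ t, HasDerivAt (fun t => ψ t 0 - π) (F α₂ α₄ r K (ψ t) 0) t :=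
      fun t => (hcoord 0 t).sub_const π
    have hb : ∀ t, |F α₂ α₄ r K (ψ t) 0| ≤
        (|2 * cos α₂| + |4 * r * cos (2 * α₂)| + |K * cos α₄| + |K * cos α₄|) *
          |ψ t 0 - π| := by
      intro t
      rw [F0_eq]
      have g1 := abs_le.mp (habscos (4 * r * cos (2 * α₂)) (ψ t 0 - π))
      have g2 := abs_le.mp (habscos (K * cos α₄) (ψ t 2))
      have g3 := abs_le.mp (habscos (K * cos α₄) (ψ t 1))
      have g4 := le_abs_self (2 * cos α₂)
      have g5 := neg_abs_le (2 * cos α₂)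
      have hG : |2 * cos α₂ + 4 * r * cos (2 * α₂) * cos (ψ t 0 - π)
          - K * cos α₄ * cos (ψ t 2) + K * cos α₄ * cos (ψ t 1)| ≤
          |2 * cos α₂| + |4 * r * cos (2 * α₂)| + |K * cos α₄| + |K * cos α₄| := by
        rw [abs_le]
        constructor
        · linarith [g1.1, g2.2, g3.1]
        · linarith [g1.2, g2.1, g3.2]
      calc |sin (ψ t 0 - π) * _| = |sin (ψ t 0 - π)| * _ := abs_mul _ _
        _ ≤ |ψ t 0 - π| *
            (|2 * cos α₂| + |4 * r * cos (2 * α₂)| + |K * cos α₄| + |K * cos α₄|) :=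
          mul_le_mul abs_sin_le_abs hG (abs_nonneg _) (abs_nonneg _)
        _ = _ := mul_comm _ _
    intro t
    have := gronwall_zero' hy hb (t₀ := 0) (by rw [hψ00]; ring) t
    linarith [this]
  -- invariance: ψ₂ ≡ 0
  have hz : ∀ t, ψ t 2 = 0 := by
    have hb : ∀ t, |F α₂ α₄ r K (ψ t) 2| ≤
        (|2 * cos α₂| + |4 * r * cos (2 * α₂)| + |K * cos α₄| + |K * cos α₄|) *
          |ψ t 2| := by
      intro t
      rw [F2_eq]
      have g1 := abs_le.mp (habscos (4 * r * cos (2 * α₂)) (ψ t 2))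
      have g2 := abs_le.mp (habscos (K * cos α₄) (ψ t 1))
      have g3 := abs_le.mp (habscos (K * cos α₄) (ψ t 0))
      have g4 := le_abs_self (2 * cos α₂)
      have g5 := neg_abs_le (2 * cos α₂)
      have hG : |-2 * cos α₂ + 4 * r * cos (2 * α₂) * cos (ψ t 2)
          + K * cos α₄ * cos (ψ t 1) - K * cos α₄ * cos (ψ t 0)| ≤
          |2 * cos α₂| + |4 * r * cos (2 * α₂)| + |K * cos α₄| + |K * cos α₄| := by
        rw [abs_le]
        constructor
        · linarith [g1.1, g2.1, g3.2]
        · linarith [g1.2, g2.2, g3.1]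
      calc |sin (ψ t 2) * _| = |sin (ψ t 2)| * _ := abs_mul _ _
        _ ≤ |ψ t 2| *
            (|2 * cos α₂| + |4 * r * cos (2 * α₂)| + |K * cos α₄| + |K * cos α₄|) :=
          mul_le_mul abs_sin_le_abs hG (abs_nonneg _) (abs_nonneg _)
        _ = _ := mul_comm _ _
    exact gronwall_zero' (hcoord 2) hb (t₀ := 0) hψ02
  -- the middle coordinate solves the 1-D ODE
  set A : ℝ := -2 * cos α₂ - 2 * K * cos α₄ with hA
  set B : ℝ := 4 * r * cos (2 * α₂) with hB
  have hχ : ∀ t, HasDerivAt (fun t => ψ t 1)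
      (sin (ψ t 1) * (A + B * cos (ψ t 1))) t := by
    intro t
    have := hcoord 1 t
    rwa [F1_eq α₂ α₄ r K (ψ t) (hπ t) (hz t)] at this
  obtain ⟨hmem, htop, hbot⟩ := onedim (A := A) (B := B)
    (by rw [hA, hB]; linarith) (by rw [hA, hB]; linarith) hχ hs hψ01
  refine ⟨fun t => ⟨hπ t, hz t, hmem t⟩, ?_, ?_⟩
  · rw [tendsto_pi_nhds]
    intro i
    fin_cases i
    · exact tendsto_const_nhds.congr fun t => (hπ t).symm
    · simpa using htop
    · exact tendsto_const_nhds.congr fun t => (hz t).symm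
  · rw [tendsto_pi_nhds]
    intro i
    fin_cases i
    · exact tendsto_const_nhds.congr fun t => (hπ t).symm
    · simpa using hbot
    · exact tendsto_const_nhds.congr fun t => (hz t).symm
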